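/- arXiv:2401.07949 — 3 statements merged into one kernel-verified Lean document; each statement's English description precedes it below -/
import Mathlib

section
/- Proposition 3.1(i) (perturbed forcing terms inherit coercivity). Let n ≥ 2 and suppose c : ℝ^n → ℝ is ℤ^n-periodic, Lipschitz continuous, and satisfies essinf_{ℝ^n}(c² − (n−1)|Dc|) ≥ δ for some δ > 0. For η ≥ 0 define c^η(x) = sup_{|z|≤η} c(x+z) and c_η(x) = inf_{|z|≤η} c(x+z). Then c^η and c_η are ℤ^n-periodic, Lipschitz continuous (with Lipschitz constant at most that of c), and satisfy essinf_{ℝ^n}((c^η)² − (n−1)|Dc^η|) ≥ δ and essinf_{ℝ^n}((c_η)² − (n−1)|Dc_η|) ≥ δ. -/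
open Filter Topology Set MeasureTheory

noncomputable section

/-- Euclidean space `ℝ^n`. -/
abbrev En (n : ℕ) : Type := EuclideanSpace ℝ (Fin n)

/-- `n × n` real matrices. -/
abbrev Mat (n : ℕ) : Type := Matrix (Fin n) (Fin n) ℝ

/-- Loewner order: `X ≤ Y` iff `Y - X` is positive semidefinite. -/
def MLE {m : Type*} [Fintype m] (X Y : Matrix m m ℝ) : Prop := (Y - X).PosSemidef

/-- The rank-one matrix `p ⊗ p`. -/
def outer {n : ℕ} (p : En n) : Mat n :=
  Matrix.vecMulVec (WithLp.equiv 2 (Fin n → ℝ) p) (WithLp.equiv 2 (Fin n → ℝ) p)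

/-- Matrix acting on a Euclidean vector. -/
def matVec {m : Type*} [Fintype m] (X : Matrix m m ℝ) (v : EuclideanSpace ℝ m) :
    EuclideanSpace ℝ m :=
  (WithLp.equiv 2 (m → ℝ)).symm (X.mulVec (WithLp.equiv 2 (m → ℝ) v))

/-- The norm `‖X‖ = sup_{|v|=1} |⟨Xv, v⟩|`. -/
def symNorm {n : ℕ} (X : Mat n) : ℝ :=
  ⨆ v : {v : En n // ‖v‖ = 1}, |(inner ℝ (matVec X v.1) v.1 : ℝ)|

/-- The vector in `ℝ^n` with the integer coordinates `k`. -/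
def intVec {n : ℕ} (k : Fin n → ℤ) : En n :=
  (WithLp.equiv 2 (Fin n → ℝ)).symm fun i => (k i : ℝ)

/-- `ℤ^n`-periodicity of a function on `ℝ^n`. -/
def ZPeriodic {n : ℕ} (v : En n → ℝ) : Prop :=
  ∀ (y : En n) (k : Fin n → ℤ), v (y + intVec k) = v y

/-- Upper semicontinuous envelope `F*` of an operator `F(X,p,y)`, computed with respect
to approach through points with `p ≠ 0`. -/
def upperEnv {n : ℕ} (F : Mat n → En n → En n → ℝ) (X : Mat n) (p y : En n) : ℝ :=
  limsup (fun w : Mat n × En n × En n => F w.1 w.2.1 w.2.2)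
    (𝓝 (X, p, y) ⊓ 𝓟 {w : Mat n × En n × En n | w.2.1 ≠ 0})

/-- Lower semicontinuous envelope `F_*` of an operator `F(X,p,y)`. -/
def lowerEnv {n : ℕ} (F : Mat n → En n → En n → ℝ) (X : Mat n) (p y : En n) : ℝ :=
  liminf (fun w : Mat n × En n × En n => F w.1 w.2.1 w.2.2)
    (𝓝 (X, p, y) ⊓ 𝓟 {w : Mat n × En n × En n | w.2.1 ≠ 0})

/-- Time derivative `φ_t` of a function `φ(x,t)`. -/
def tDeriv {n : ℕ} (φ : En n × ℝ → ℝ) (z : En n × ℝ) : ℝ := fderiv ℝ φ z (0, 1)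

/-- Spatial gradient `Dφ` of a function `φ(x,t)`. -/
def sGrad {n : ℕ} (φ : En n × ℝ → ℝ) (z : En n × ℝ) : En n :=
  (WithLp.equiv 2 (Fin n → ℝ)).symm fun i => fderiv ℝ φ z (EuclideanSpace.single i 1, 0)

/-- Spatial Hessian `D²φ` of a function `φ(x,t)`. -/
def sHess {n : ℕ} (φ : En n × ℝ → ℝ) (z : En n × ℝ) : Mat n :=
  Matrix.of fun i j =>
    fderiv ℝ (fun w => fderiv ℝ φ w (EuclideanSpace.single j 1, 0)) z
      (EuclideanSpace.single i 1, 0)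

/-- Gradient of a function `ψ(y)` of space only. -/
def grad1 {n : ℕ} (ψ : En n → ℝ) (y : En n) : En n :=
  (WithLp.equiv 2 (Fin n → ℝ)).symm fun i => fderiv ℝ ψ y (EuclideanSpace.single i 1)

/-- Hessian of a function `ψ(y)` of space only. -/
def hess1 {n : ℕ} (ψ : En n → ℝ) (y : En n) : Mat n :=
  Matrix.of fun i j =>
    fderiv ℝ (fun w => fderiv ℝ ψ w (EuclideanSpace.single j 1)) y (EuclideanSpace.single i 1)

/-- Viscosity subsolution of `u_t + G(D²u, Du, x) = 0` on `ℝ^n × (0,∞)`. -/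
def IsViscSubsol {n : ℕ} (G : Mat n → En n → En n → ℝ) (u : En n × ℝ → ℝ) : Prop :=
  ∀ φ : En n × ℝ → ℝ, ContDiff ℝ 2 φ →
    ∀ (x₀ : En n) (t₀ : ℝ), 0 < t₀ →
      IsLocalMax (fun z => u z - φ z) (x₀, t₀) →
      tDeriv φ (x₀, t₀) + lowerEnv G (sHess φ (x₀, t₀)) (sGrad φ (x₀, t₀)) x₀ ≤ 0

/-- Viscosity supersolution of `u_t + G(D²u, Du, x) = 0` on `ℝ^n × (0,∞)`. -/
def IsViscSupersol {n : ℕ} (G : Mat n → En n → En n → ℝ) (u : En n × ℝ → ℝ) : Prop :=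
  ∀ φ : En n × ℝ → ℝ, ContDiff ℝ 2 φ →
    ∀ (x₀ : En n) (t₀ : ℝ), 0 < t₀ →
      IsLocalMin (fun z => u z - φ z) (x₀, t₀) →
      0 ≤ tDeriv φ (x₀, t₀) + upperEnv G (sHess φ (x₀, t₀)) (sGrad φ (x₀, t₀)) x₀

/-- Viscosity solution of the Cauchy problem `u_t + G(D²u, Du, x) = 0`, `u(·,0) = u₀`. -/
def IsCauchySol {n : ℕ} (G : Mat n → En n → En n → ℝ) (u₀ : En n → ℝ)
    (u : En n × ℝ → ℝ) : Prop :=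
  ContinuousOn u (univ ×ˢ Ici (0:ℝ)) ∧ IsViscSubsol G u ∧ IsViscSupersol G u ∧
    ∀ x : En n, u (x, 0) = u₀ x

/-- Viscosity subsolution of the stationary problem `G(D²v, p + Dv, y) = μ` on `ℝ^n`. -/
def IsStatSubsol {n : ℕ} (G : Mat n → En n → En n → ℝ) (p : En n) (μ : ℝ)
    (v : En n → ℝ) : Prop :=
  ∀ φ : En n → ℝ, ContDiff ℝ 2 φ → ∀ y₀ : En n,
    IsLocalMax (fun y => v y - φ y) y₀ →
    lowerEnv G (hess1 φ y₀) (p + grad1 φ y₀) y₀ ≤ μ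

/-- Viscosity supersolution of the stationary problem `G(D²v, p + Dv, y) = μ` on `ℝ^n`. -/
def IsStatSupersol {n : ℕ} (G : Mat n → En n → En n → ℝ) (p : En n) (μ : ℝ)
    (v : En n → ℝ) : Prop :=
  ∀ φ : En n → ℝ, ContDiff ℝ 2 φ → ∀ y₀ : En n,
    IsLocalMin (fun y => v y - φ y) y₀ →
    μ ≤ upperEnv G (hess1 φ y₀) (p + grad1 φ y₀) y₀

/-- Viscosity solution of the cell problem `G(D²v, p + Dv, y) = μ`. -/
def IsStatSol {n : ℕ} (G : Mat n → En n → En n → ℝ) (p : En n) (μ : ℝ)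
    (v : En n → ℝ) : Prop :=
  Continuous v ∧ IsStatSubsol G p μ v ∧ IsStatSupersol G p μ v

/-- The `ε`-scaled operator `(X,p,x) ↦ F(εX, p, x/ε)`. -/
def epsOp {n : ℕ} (F : Mat n → En n → En n → ℝ) (ε : ℝ) : Mat n → En n → En n → ℝ :=
  fun X p x => F (ε • X) p (ε⁻¹ • x)

/-- The effective geometric operator `(X,p,x) ↦ F̄(p/|p|)|p|`. -/
def effOp {n : ℕ} (Fbar : En n → ℝ) : Mat n → En n → En n → ℝ :=
  fun _ p _ => Fbar (‖p‖⁻¹ • p) * ‖p‖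

/-- The matrix `[[I_n, -I_n], [-I_n, I_n]]`. -/
def J2n (n : ℕ) : Matrix (Fin n ⊕ Fin n) (Fin n ⊕ Fin n) ℝ :=
  Matrix.fromBlocks 1 (-1) (-1) 1

/-- Conditions (I)–(V) on a geometric operator `F(X,p,y)`. -/
def GoodOperator (n : ℕ) (F : Mat n → En n → En n → ℝ) : Prop :=
  -- (I) continuity away from `p = 0`
  (ContinuousOn (fun w : Mat n × En n × En n => F w.1 w.2.1 w.2.2)
      {w : Mat n × En n × En n | w.2.1 ≠ 0}) ∧
  -- (II) degenerate ellipticity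
  (∀ (X Y : Mat n) (p y : En n), p ≠ 0 → MLE X Y → F Y p y ≤ F X p y) ∧
  -- (III) geometricity
  (∀ (X : Mat n) (p y : En n) (lam mu : ℝ), p ≠ 0 → 0 < lam →
      F (lam • X + mu • outer p) (lam • p) y = lam * F X p y) ∧
  -- (IV) ℤ^n-periodicity
  (∀ (X : Mat n) (p y : En n) (k : Fin n → ℤ), F X p (y + intVec k) = F X p y) ∧
  -- (V)(i) local boundedness
  (∀ R : ℝ, 0 < R → ∃ M : ℝ, 0 < M ∧ ∀ (X : Mat n) (p y : En n),
      symNorm X ≤ R → 0 < ‖p‖ → ‖p‖ ≤ R → |F X p y| ≤ M) ∧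
  -- (V)(ii) regularity
  (∃ K : ℝ, 0 < K ∧ ∃ ω : ℝ → ℝ, (∀ r : ℝ, 0 ≤ ω r) ∧ Tendsto ω (𝓝[>] 0) (𝓝 0) ∧
      ∀ (α : ℝ) (X Y : Mat n) (x y : En n), 0 ≤ α → (x = y → α = 0) →
        MLE (-((K * α) • (1 : Matrix (Fin n ⊕ Fin n) (Fin n ⊕ Fin n) ℝ)))
          (Matrix.fromBlocks X 0 0 (-Y)) →
        MLE (Matrix.fromBlocks X 0 0 (-Y)) ((K * α) • J2n n) →
        upperEnv F X (α • (x - y)) x - lowerEnv F Y (α • (x - y)) y ≤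
          ω (‖x - y‖ * (1 + α * ‖x - y‖)))

/-- The forced mean curvature operator `F(X,p,y) = -tr{(I - p̂⊗p̂)X} - c(y)|p|`. -/
def fmcOp {n : ℕ} (c : En n → ℝ) : Mat n → En n → En n → ℝ := fun X p y =>
  -Matrix.trace (((1 : Mat n) - (‖p‖ ^ 2)⁻¹ • outer p) * X) - c y * ‖p‖

/-- The coercivity condition `essinf (c² - (n-1)|Dc|) ≥ δ`, expressed via the a.e.
defined gradient of the Lipschitz function `c`. -/
def Coercive {n : ℕ} (c : En n → ℝ) (δ : ℝ) : Prop :=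
  ∀ᵐ x : En n ∂volume,
    DifferentiableAt ℝ c x → δ ≤ (c x) ^ 2 - ((n : ℝ) - 1) * ‖gradient c x‖

/-- `c^η(x) = sup_{|z| ≤ η} c(x+z)`. -/
def cSup {n : ℕ} (c : En n → ℝ) (η : ℝ) (x : En n) : ℝ :=
  sSup ((fun z => c (x + z)) '' {z : En n | ‖z‖ ≤ η})

/-- `c_η(x) = inf_{|z| ≤ η} c(x+z)`. -/
def cInf {n : ℕ} (c : En n → ℝ) (η : ℝ) (x : En n) : ℝ :=
  sInf ((fun z => c (x + z)) '' {z : En n | ‖z‖ ≤ η})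

/-- Two-dimensional cellular flow `V(y) = A(-cos y₂ sin y₁, cos y₁ sin y₂)`. -/
def cellFlow (A : ℝ) (y : En 2) : En 2 :=
  (WithLp.equiv 2 (Fin 2 → ℝ)).symm
    ![-(A * Real.cos (WithLp.equiv 2 (Fin 2 → ℝ) y 1) * Real.sin (WithLp.equiv 2 (Fin 2 → ℝ) y 0)),
      A * Real.cos (WithLp.equiv 2 (Fin 2 → ℝ) y 0) * Real.sin (WithLp.equiv 2 (Fin 2 → ℝ) y 1)]

/-- The curvature G-equation operator
`F(X,p,y) = (|p| - d tr{(I₂ - p̂⊗p̂)X})₊ + V(y)·p`. -/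
def gOp (d A : ℝ) : Mat 2 → En 2 → En 2 → ℝ := fun X p y =>
  max (‖p‖ - d * Matrix.trace (((1 : Mat 2) - (‖p‖ ^ 2)⁻¹ • outer p) * X)) 0
    + (inner ℝ (cellFlow A y) p : ℝ)

/-- Viscosity subsolution of the discounted problem `λ v + G(D²v, p + Dv, y) = 0`. -/
def IsDiscSubsol {n : ℕ} (lam : ℝ) (G : Mat n → En n → En n → ℝ) (p : En n)
    (v : En n → ℝ) : Prop :=
  ∀ φ : En n → ℝ, ContDiff ℝ 2 φ → ∀ y₀ : En n,
    IsLocalMax (fun y => v y - φ y) y₀ →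
    lam * v y₀ + lowerEnv G (hess1 φ y₀) (p + grad1 φ y₀) y₀ ≤ 0

/-- Viscosity supersolution of the discounted problem `λ v + G(D²v, p + Dv, y) = 0`. -/
def IsDiscSupersol {n : ℕ} (lam : ℝ) (G : Mat n → En n → En n → ℝ) (p : En n)
    (v : En n → ℝ) : Prop :=
  ∀ φ : En n → ℝ, ContDiff ℝ 2 φ → ∀ y₀ : En n,
    IsLocalMin (fun y => v y - φ y) y₀ →
    0 ≤ lam * v y₀ + upperEnv G (hess1 φ y₀) (p + grad1 φ y₀) y₀

/-- Viscosity solution of the discounted problem `λ v + G(D²v, p + Dv, y) = 0`. -/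
def IsDiscSol {n : ℕ} (lam : ℝ) (G : Mat n → En n → En n → ℝ) (p : En n)
    (v : En n → ℝ) : Prop :=
  Continuous v ∧ IsDiscSubsol lam G p v ∧ IsDiscSupersol lam G p v

/-- Lower half-relaxed limit `liminf_* u^ε`. -/
def lowerRelax {n : ℕ} (uu : ℝ → En n × ℝ → ℝ) (z : En n × ℝ) : ℝ :=
  ⨆ r : {r : ℝ // 0 < r}, sInf {a : ℝ | ∃ (ε : ℝ) (w : En n × ℝ),
    0 < ε ∧ ε ≤ r.1 ∧ ‖w.1 - z.1‖ + |w.2 - z.2| ≤ r.1 ∧ a = uu ε w}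

/-- Upper half-relaxed limit `limsup* u^ε`. -/
def upperRelax {n : ℕ} (uu : ℝ → En n × ℝ → ℝ) (z : En n × ℝ) : ℝ :=
  ⨅ r : {r : ℝ // 0 < r}, sSup {a : ℝ | ∃ (ε : ℝ) (w : En n × ℝ),
    0 < ε ∧ ε ≤ r.1 ∧ ‖w.1 - z.1‖ + |w.2 - z.2| ≤ r.1 ∧ a = uu ε w}

/-- The embedding `ν ↦ (ν, 0)` of `ℝ^{n-1}` into `ℝ^n`. -/
def padOne {n : ℕ} (ν : En (n - 1)) : En n :=
  (WithLp.equiv 2 (Fin n → ℝ)).symm fun i =>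
    if h : (i : ℕ) < n - 1 then WithLp.equiv 2 (Fin (n - 1) → ℝ) ν ⟨i, h⟩ else 0


end


/-!
The supremum defining `c^η(x)` is attained at some `x + z`, so `c^η` touches the translate
`c(· + z)` from above at `x`, and at a point of differentiability `|Dc^η(x)|` is at most the
Lipschitz constant of `c` near `x + z`. Coercivity bounds that constant: near `y₀`, a.e.
`(n-1)|Dc| ≤ c(y₀)² - δ + o(1)`. Since segments are null sets, the a.e. gradient bound is turned
into a bound along segments by averaging `c` over translates of a segment against a bump
function and applying the mean value inequality. Hence `(n-1)|Dc^η(x)| ≤ c(x+z)² - δ`, and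
`c(x+z) = c^η(x)`. The infimum reduces to the supremum through `c_η = -(-c)^η`.
-/

open Metric

theorem hasDerivWithinAt_Ici_of_tendsto_slope_zero_right {f : ℝ → ℝ} {f' x : ℝ}
    (h : Tendsto (fun t => t⁻¹ * (f (x + t) - f x)) (𝓝[>] 0) (𝓝 f')) :
    HasDerivWithinAt f f' (Ici x) x := by
  have hmap : 𝓝[>] x = map (x + ·) (𝓝[>] 0) := by simp
  rw [hasDerivWithinAt_iff_tendsto_slope, Ici_sdiff_left, hmap, tendsto_map'_iff]
  simpa [slope, Function.comp_def] using h

theorem abs_integral_mul_le_of_ae_abs_le {α : Type*} [MeasurableSpace α] {μ : Measure α}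
    {g ψ : α → ℝ} {K : ℝ} (hψ : ∀ x, 0 ≤ ψ x) (hψ₁ : ∫ x, ψ x ∂μ = 1)
    (hg : ∀ᵐ x ∂μ, x ∈ Function.support ψ → |g x| ≤ K) :
    |∫ x, g x * ψ x ∂μ| ≤ K := by
  have hψi : Integrable ψ μ := Integrable.of_integral_ne_zero (by simp [hψ₁])
  have hbound : ∀ᵐ x ∂μ, ‖g x * ψ x‖ ≤ K * ψ x := by
    filter_upwards [hg] with x hx
    by_cases hx0 : ψ x = 0
    · simp [hx0]
    · rw [norm_mul, Real.norm_of_nonneg (hψ x), Real.norm_eq_abs]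
      exact mul_le_mul_of_nonneg_right (hx hx0) (hψ x)
  calc |∫ x, g x * ψ x ∂μ| = ‖∫ x, g x * ψ x ∂μ‖ := (Real.norm_eq_abs _).symm
    _ ≤ ∫ x, K * ψ x ∂μ := norm_integral_le_of_norm_le (hψi.const_mul K) hbound
    _ = K := by rw [integral_const_mul, hψ₁, mul_one]

theorem lineDeriv_comp_add_right {E : Type*} [NormedAddCommGroup E] [NormedSpace ℝ E]
    (c : E → ℝ) (x w v : E) :
    lineDeriv ℝ (fun y => c (y + w)) x v = lineDeriv ℝ c (x + w) v := by
  simp only [lineDeriv, add_right_comm _ _ w]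

theorem norm_gradient_eq_norm_fderiv {E : Type*} [NormedAddCommGroup E] [InnerProductSpace ℝ E]
    [CompleteSpace E] (f : E → ℝ) (x : E) : ‖gradient f x‖ = ‖fderiv ℝ f x‖ := by
  rw [gradient, LinearIsometryEquiv.norm_map]

theorem LipschitzWith.abs_integral_comp_add_mul_sub_le {E : Type*} [NormedAddCommGroup E]
    [MeasurableSpace E] [OpensMeasurableSpace E] {μ : Measure E} [IsFiniteMeasureOnCompacts μ]
    {c ψ : E → ℝ} {L : NNReal} (hc : LipschitzWith L c)
    (hψ : Continuous ψ) (hψc : HasCompactSupport ψ) (hψ₀ : ∀ x, 0 ≤ ψ x)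
    (hψ₁ : ∫ x, ψ x ∂μ = 1) {y₀ : E} {ρ : ℝ} (hsupp : Function.support ψ ⊆ ball y₀ ρ) (w : E) :
    |∫ x, c (x + w) * ψ x ∂μ - c (y₀ + w)| ≤ L * ρ := by
  have hint : Integrable (fun x => c (x + w) * ψ x) μ :=
    ((hc.continuous.comp (continuous_add_const _)).mul hψ).integrable_of_hasCompactSupport
      hψc.mul_left
  have hsub : ∫ x, c (x + w) * ψ x ∂μ - c (y₀ + w) =
      ∫ x, (c (x + w) - c (y₀ + w)) * ψ x ∂μ := by
    simp only [sub_mul]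
    rw [integral_sub hint ((hψ.integrable_of_hasCompactSupport hψc).const_mul _),
      integral_const_mul, hψ₁, mul_one]
  rw [hsub]
  refine abs_integral_mul_le_of_ae_abs_le hψ₀ hψ₁ (.of_forall fun x hx => ?_)
  have hx' : ‖x - y₀‖ < ρ := by simpa [dist_eq_norm] using hsupp hx
  calc |c (x + w) - c (y₀ + w)| ≤ L * ‖x - y₀‖ := by
        simpa [Real.dist_eq, dist_eq_norm] using hc.dist_le_mul (x + w) (y₀ + w)
    _ ≤ L * ρ := by gcongr

section AeGradientBound

variable {E : Type*} [NormedAddCommGroup E] [NormedSpace ℝ E] [FiniteDimensional ℝ E]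
  [MeasurableSpace E] [BorelSpace E] {μ : Measure E} [μ.IsAddHaarMeasure]
  {c ψ : E → ℝ} {L : NNReal}

theorem LipschitzWith.hasDerivWithinAt_integral_comp_add_smul_mul (hc : LipschitzWith L c)
    (hψ : Continuous ψ) (hψc : HasCompactSupport ψ) (v : E) (s : ℝ) :
    HasDerivWithinAt (fun t => ∫ x, c (x + t • v) * ψ x ∂μ)
      (∫ x, lineDeriv ℝ c (x + s • v) v * ψ x ∂μ) (Ici s) s := by
  have hint : ∀ t : ℝ, Integrable (fun x => c (x + t • v) * ψ x) μ := fun t =>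
    ((hc.continuous.comp (continuous_add_const _)).mul hψ).integrable_of_hasCompactSupport
      hψc.mul_left
  have hcs : LipschitzWith L (fun x => c (x + s • v)) := .of_dist_le_mul fun x y => by
    simpa using hc.dist_le_mul (x + s • v) (y + s • v)
  have hlim := hcs.integral_inv_smul_sub_mul_tendsto_integral_lineDeriv_mul
    (hψ.integrable_of_hasCompactSupport hψc) (μ := μ) v
  simp only [lineDeriv_comp_add_right] at hlim
  refine hasDerivWithinAt_Ici_of_tendsto_slope_zero_right (hlim.congr fun t => ?_)
  simp only [smul_eq_mul, add_right_comm _ (t • v), add_assoc, ← add_smul, mul_assoc,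
    integral_const_mul, sub_mul]
  rw [integral_sub (hint _) (hint _)]

theorem continuous_integral_comp_add_smul_mul (hc : Continuous c) (hψ : Continuous ψ)
    (hψc : HasCompactSupport ψ) (v : E) :
    Continuous fun t : ℝ => ∫ x, c (x + t • v) * ψ x ∂μ := by
  have hset : (fun t : ℝ => ∫ x, c (x + t • v) * ψ x ∂μ) =
      fun t => ∫ x in tsupport ψ, c (x + t • v) * ψ x ∂μ :=
    funext fun t => (setIntegral_eq_integral_of_forall_compl_eq_zero fun x hx => by
      simp [image_eq_zero_of_notMem_tsupport hx]).symm
  rw [hset]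
  exact continuous_parametric_integral_of_continuous (by fun_prop) hψc

theorem LipschitzWith.abs_integral_lineDeriv_comp_add_mul_le (hc : LipschitzWith L c)
    (hψ₀ : ∀ x, 0 ≤ ψ x) (hψ₁ : ∫ x, ψ x ∂μ = 1) {y₀ w : E} {ρ r M : ℝ}
    (hsupp : Function.support ψ ⊆ ball y₀ ρ) (hw : ‖w‖ + ρ ≤ r)
    (hM : ∀ᵐ x ∂μ, x ∈ ball y₀ r → DifferentiableAt ℝ c x → ‖fderiv ℝ c x‖ ≤ M) (v : E) :
    |∫ x, lineDeriv ℝ c (x + w) v * ψ x ∂μ| ≤ M * ‖v‖ := by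
  refine abs_integral_mul_le_of_ae_abs_le hψ₀ hψ₁ ?_
  filter_upwards [(measurePreserving_add_right μ w).quasiMeasurePreserving.ae
    (hM.and hc.ae_differentiableAt)] with x ⟨hxM, hxd⟩ hx
  have hmem : x + w ∈ ball y₀ r := by
    have hx' : ‖x - y₀‖ < ρ := by simpa [dist_eq_norm] using hsupp hx
    rw [mem_ball, dist_eq_norm, add_sub_right_comm]
    linarith [norm_add_le (x - y₀) w]
  rw [hxd.lineDeriv_eq_fderiv, ← Real.norm_eq_abs]
  exact (ContinuousLinearMap.le_opNorm _ v).trans (by gcongr; exact hxM hmem hxd)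

theorem LipschitzWith.abs_sub_le_of_ae_norm_fderiv_le_of_lt (hc : LipschitzWith L c)
    {y₀ y : E} {r M ρ : ℝ}
    (hM : ∀ᵐ x ∂μ, x ∈ ball y₀ r → DifferentiableAt ℝ c x → ‖fderiv ℝ c x‖ ≤ M)
    (hρ : 0 < ρ) (hyρ : ‖y - y₀‖ + ρ < r) :
    |c y - c y₀| ≤ M * ‖y - y₀‖ + 2 * L * ρ := by
  set v := y - y₀
  let φ : ContDiffBump y₀ := ⟨ρ / 2, ρ, half_pos hρ, half_lt_self hρ⟩
  have hsupp : Function.support (φ.normed μ) ⊆ ball y₀ ρ := φ.support_normed_eq.subset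
  have happrox := hc.abs_integral_comp_add_mul_sub_le φ.continuous_normed
    φ.hasCompactSupport_normed φ.nonneg_normed φ.integral_normed hsupp
  have hmvt := norm_image_sub_le_of_norm_deriv_right_le_segment
    (continuous_integral_comp_add_smul_mul hc.continuous φ.continuous_normed
      φ.hasCompactSupport_normed v).continuousOn
    (fun s _ => hc.hasDerivWithinAt_integral_comp_add_smul_mul φ.continuous_normed
      φ.hasCompactSupport_normed v s)
    (fun s hs => by
      refine (Real.norm_eq_abs _).trans_le (hc.abs_integral_lineDeriv_comp_add_mul_le
        φ.nonneg_normed φ.integral_normed hsupp ?_ hM v)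
      rw [norm_smul, Real.norm_of_nonneg hs.1]
      nlinarith [norm_nonneg v, hs.2])
    1 ⟨zero_le_one, le_rfl⟩
  have h₀ := happrox ((0 : ℝ) • v)
  have h₁ := happrox ((1 : ℝ) • v)
  simp only [zero_smul, one_smul, add_zero, sub_zero, mul_one, Real.norm_eq_abs] at h₀ h₁ hmvt
  rw [show y₀ + v = y from add_sub_cancel y₀ y] at h₁
  rw [abs_le] at *
  constructor <;> linarith

theorem LipschitzWith.abs_sub_le_of_ae_norm_fderiv_le (hc : LipschitzWith L c)
    {y₀ y : E} {r M : ℝ}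
    (hM : ∀ᵐ x ∂μ, x ∈ ball y₀ r → DifferentiableAt ℝ c x → ‖fderiv ℝ c x‖ ≤ M)
    (hy : y ∈ ball y₀ r) :
    |c y - c y₀| ≤ M * ‖y - y₀‖ := by
  have hgap : 0 < r - ‖y - y₀‖ := by rw [mem_ball, dist_eq_norm] at hy; linarith
  have hlim : Tendsto (fun ρ : ℝ => M * ‖y - y₀‖ + 2 * L * ρ) (𝓝[>] 0) (𝓝 (M * ‖y - y₀‖)) := by
    have : Continuous fun ρ : ℝ => M * ‖y - y₀‖ + 2 * L * ρ := by fun_prop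
    simpa using tendsto_nhdsWithin_of_tendsto_nhds (this.tendsto 0)
  refine ge_of_tendsto hlim ?_
  filter_upwards [Ioo_mem_nhdsGT hgap] with ρ hρ
  exact hc.abs_sub_le_of_ae_norm_fderiv_le_of_lt hM hρ.1 (by linarith [hρ.2])

end AeGradientBound

theorem norm_fderiv_le_of_eventually_sub_le {E : Type*} [NormedAddCommGroup E]
    [NormedSpace ℝ E] {f : E → ℝ} {x₀ : E} {K : ℝ} (hK : 0 ≤ K) (hf : DifferentiableAt ℝ f x₀)
    (h : ∀ᶠ y in 𝓝 x₀, f x₀ - f y ≤ K * ‖y - x₀‖) :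
    ‖fderiv ℝ f x₀‖ ≤ K := by
  have hdir : ∀ v, -(K * ‖v‖) ≤ fderiv ℝ f x₀ v := fun v => by
    have hline : Tendsto (fun t : ℝ => x₀ + t • v) (𝓝[>] 0) (𝓝 x₀) := by
      have : Continuous fun t : ℝ => x₀ + t • v := by fun_prop
      simpa using tendsto_nhdsWithin_of_tendsto_nhds (this.tendsto 0)
    refine ge_of_tendsto (hf.hasFDerivAt.hasLineDerivAt v).tendsto_slope_zero_right ?_
    filter_upwards [hline.eventually h, self_mem_nhdsWithin] with t ht (htpos : 0 < t)
    rw [add_sub_cancel_left, norm_smul, Real.norm_of_nonneg htpos.le] at ht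
    rw [smul_eq_mul, le_inv_mul_iff₀ htpos]
    linarith
  refine ContinuousLinearMap.opNorm_le_bound _ hK fun v => abs_le.2 ⟨?_, ?_⟩
  · exact hdir v
  · simpa using hdir (-v)

section Coercive

variable {n : ℕ} {c : En n → ℝ} {δ : ℝ}

theorem Coercive.le_sq (hn : 1 ≤ n) {L : NNReal} (hc : LipschitzWith L c)
    (hcoer : Coercive c δ) (y : En n) :
    δ ≤ c y ^ 2 := by
  have hn' : (0 : ℝ) ≤ n - 1 := by
    rw [sub_nonneg]; exact_mod_cast hn
  have hae : ∀ᵐ x, δ ≤ c x ^ 2 := by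
    filter_upwards [hcoer, hc.ae_differentiableAt] with x hx hd
    exact (hx hd).trans (sub_le_self _ (mul_nonneg hn' (norm_nonneg _)))
  have hdense := (Measure.dense_of_ae hae).closure_eq
  have hcont : Continuous fun x => c x ^ 2 := hc.continuous.pow 2
  rw [(isClosed_le continuous_const hcont).closure_eq] at hdense
  exact eq_univ_iff_forall.1 hdense y

theorem Coercive.eventually_abs_sub_le (hn : 2 ≤ n) {L : NNReal} (hc : LipschitzWith L c)
    (hcoer : Coercive c δ) (y₀ : En n) {ε : ℝ} (hε : 0 < ε) :
    ∀ᶠ y in 𝓝 y₀, |c y - c y₀| ≤ ((c y₀ ^ 2 - δ) / (n - 1) + ε) * ‖y - y₀‖ := by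
  have hn' : (0 : ℝ) < n - 1 := by
    have : (2 : ℝ) ≤ n := by exact_mod_cast hn
    linarith
  have hnear : ∀ᶠ y in 𝓝 y₀, c y ^ 2 < c y₀ ^ 2 + (n - 1) * ε :=
    (hc.continuous.pow 2).continuousAt.eventually_lt continuousAt_const
      (lt_add_of_pos_right _ (mul_pos hn' hε))
  obtain ⟨r, hr, hball⟩ := Metric.eventually_nhds_iff_ball.1 hnear
  have hM : ∀ᵐ x, x ∈ ball y₀ r → DifferentiableAt ℝ c x →
      ‖fderiv ℝ c x‖ ≤ (c y₀ ^ 2 - δ) / (n - 1) + ε := by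
    filter_upwards [hcoer] with x hx hxr hd
    have hx' := hx hd
    have hxr' := hball x hxr
    rw [← norm_gradient_eq_norm_fderiv, div_add' _ _ _ hn'.ne', le_div_iff₀ hn']
    nlinarith
  filter_upwards [ball_mem_nhds y₀ hr] with y hy using hc.abs_sub_le_of_ae_norm_fderiv_le hM hy

theorem Coercive.le_of_touch_above (hn : 2 ≤ n) {L : NNReal} (hc : LipschitzWith L c)
    (hcoer : Coercive c δ) {f : En n → ℝ} {x₀ y₀ : En n} (heq : f x₀ = c y₀)
    (hle : ∀ h, c (y₀ + h) ≤ f (x₀ + h)) (hf : DifferentiableAt ℝ f x₀) :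
    δ ≤ f x₀ ^ 2 - (n - 1) * ‖gradient f x₀‖ := by
  have hn' : (0 : ℝ) < n - 1 := by
    have : (2 : ℝ) ≤ n := by exact_mod_cast hn
    linarith
  set M₀ := (c y₀ ^ 2 - δ) / (n - 1)
  have hM₀ : 0 ≤ M₀ := div_nonneg (sub_nonneg.2 (hcoer.le_sq (by omega) hc y₀)) hn'.le
  have hgrad : ‖gradient f x₀‖ ≤ M₀ := by
    rw [norm_gradient_eq_norm_fderiv]
    refine le_of_forall_pos_le_add fun ε hε =>
      norm_fderiv_le_of_eventually_sub_le (by linarith) hf ?_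
    have hshift : Tendsto (fun y => y₀ + (y - x₀)) (𝓝 x₀) (𝓝 y₀) := by
      have : Continuous fun y => y₀ + (y - x₀) := by fun_prop
      simpa using this.tendsto x₀
    filter_upwards [hshift.eventually (hcoer.eventually_abs_sub_le hn hc y₀ hε)] with y hy
    have hy' := hle (y - x₀)
    rw [add_sub_cancel] at hy'
    rw [add_sub_cancel_left] at hy
    linarith [neg_abs_le (c (y₀ + (y - x₀)) - c y₀)]
  calc δ = c y₀ ^ 2 - (n - 1) * M₀ := by
        rw [mul_div_cancel₀ _ hn'.ne']; ring
    _ ≤ f x₀ ^ 2 - (n - 1) * ‖gradient f x₀‖ := by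
        rw [heq]; gcongr

theorem Coercive.neg (hcoer : Coercive c δ) : Coercive (fun y => -c y) δ := by
  filter_upwards [hcoer] with x hx hd
  have hgrad : gradient (fun y => -c y) x = -gradient c x := by
    simp only [gradient, fderiv_fun_neg, map_neg]
  rw [hgrad, norm_neg, neg_sq]
  exact hx (by simpa using hd.neg)

end Coercive

theorem isCompact_setOf_norm_le {E : Type*} [NormedAddCommGroup E] [ProperSpace E] (r : ℝ) :
    IsCompact {z : E | ‖z‖ ≤ r} := by
  simpa only [closedBall, dist_zero_right] using isCompact_closedBall (0 : E) r

section SupInf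

variable {n : ℕ} {c : En n → ℝ} {η : ℝ}

theorem ZPeriodic.neg (h : ZPeriodic c) : ZPeriodic (fun y => -c y) :=
  fun y k => congrArg Neg.neg (h y k)

theorem apply_add_le_cSup (hc : Continuous c) {x z : En n} (hz : ‖z‖ ≤ η) :
    c (x + z) ≤ cSup c η x :=
  le_csSup ((isCompact_setOf_norm_le η).image (by fun_prop)).bddAbove ⟨z, hz, rfl⟩

theorem exists_eq_cSup (hc : Continuous c) (hη : 0 ≤ η) (x : En n) :
    ∃ z, ‖z‖ ≤ η ∧ cSup c η x = c (x + z) := by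
  have hK : IsCompact ((fun z => c (x + z)) '' {z : En n | ‖z‖ ≤ η}) :=
    (isCompact_setOf_norm_le η).image (by fun_prop)
  obtain ⟨z, hz, hzx⟩ := hK.sSup_mem ⟨c (x + 0), 0, by simpa using hη, rfl⟩
  exact ⟨z, hz, hzx.symm⟩

theorem zPeriodic_cSup (hc : ZPeriodic c) : ZPeriodic (cSup c η) := fun y k => by
  unfold cSup
  congr 1
  refine image_congr fun z _ => ?_
  rw [add_right_comm, hc]

theorem lipschitzWith_cSup {L : NNReal} (hc : LipschitzWith L c) (hη : 0 ≤ η) :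
    LipschitzWith L (cSup c η) := .of_le_add_mul L fun x y => by
  obtain ⟨z, hz, hxz⟩ := exists_eq_cSup hc.continuous hη x
  have hdist := hc.dist_le_mul (x + z) (y + z)
  rw [dist_add_right, Real.dist_eq] at hdist
  rw [hxz]
  linarith [apply_add_le_cSup hc.continuous hz (x := y), le_abs_self (c (x + z) - c (y + z))]

theorem coercive_cSup (hn : 2 ≤ n) {L : NNReal} (hc : LipschitzWith L c) {δ : ℝ}
    (hcoer : Coercive c δ) (hη : 0 ≤ η) : Coercive (cSup c η) δ :=
  .of_forall fun x hx => by
    obtain ⟨z, hz, hxz⟩ := exists_eq_cSup hc.continuous hη x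
    refine hcoer.le_of_touch_above hn hc hxz (fun h => ?_) hx
    rw [add_right_comm]
    exact apply_add_le_cSup hc.continuous hz

theorem cInf_eq_neg_cSup_neg (c : En n → ℝ) (η : ℝ) :
    cInf c η = fun x => -cSup (fun y => -c y) η x := funext fun x => by
  rw [cInf, cSup, Real.sInf_def, ← image_neg_eq_neg, image_image]

end SupInf

theorem perturbed_forcing_inherits_coercivity_general
    (n : ℕ) (hn : 2 ≤ n)
    (c : En n → ℝ) (Lc : NNReal) (hcLip : LipschitzWith Lc c) (hcPer : ZPeriodic c)
    (δ : ℝ) (hcoer : Coercive c δ)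
    (η : ℝ) (hη : 0 ≤ η) :
    (ZPeriodic (cSup c η) ∧ LipschitzWith Lc (cSup c η) ∧ Coercive (cSup c η) δ) ∧
      (ZPeriodic (cInf c η) ∧ LipschitzWith Lc (cInf c η) ∧ Coercive (cInf c η) δ) := by
  refine ⟨⟨zPeriodic_cSup hcPer, lipschitzWith_cSup hcLip hη, coercive_cSup hn hcLip hcoer hη⟩, ?_⟩
  rw [cInf_eq_neg_cSup_neg]
  exact ⟨(zPeriodic_cSup hcPer.neg).neg, (lipschitzWith_cSup hcLip.neg hη).neg,
    (coercive_cSup hn hcLip.neg hcoer.neg hη).neg⟩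

/-- Proposition 3.1(i): the perturbed forcing terms `c^η(x) = sup_{|z|≤η} c(x+z)` and
`c_η(x) = inf_{|z|≤η} c(x+z)` are again `ℤ^n`-periodic, Lipschitz continuous (with the
same constant) and satisfy the coercivity condition with the same `δ`. -/
theorem perturbed_forcing_inherits_coercivity
    (n : ℕ) (hn : 2 ≤ n)
    (c : En n → ℝ) (Lc : NNReal) (hcLip : LipschitzWith Lc c) (hcPer : ZPeriodic c)
    (δ : ℝ) (hδ : 0 < δ) (hcoer : Coercive c δ)
    (η : ℝ) (hη : 0 ≤ η) :
    (ZPeriodic (cSup c η) ∧ LipschitzWith Lc (cSup c η) ∧ Coercive (cSup c η) δ) ∧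
      (ZPeriodic (cInf c η) ∧ LipschitzWith Lc (cInf c η) ∧ Coercive (cInf c η) δ) :=
  perturbed_forcing_inherits_coercivity_general n hn c Lc hcLip hcPer δ hcoer η hη
end

section
/- Hessian ordering from the Crandall–Ishii matrix inequality. Let n ≥ 1, δ > 0, let q ∈ ℝ^n with |q| = 1, set B = δ(I_n + 2 q qᵀ) and A = [[B, −B],[−B, B]] ∈ S^{2n}. Suppose X, Y ∈ S^n satisfy −9δ I_{2n} ≤ [[X, 0],[0, −Y]] ≤ A + (1/(3δ)) A² in the Loewner order. Then −9δ I_n ≤ X ≤ Y ≤ 9δ I_n. -/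
/-! Compressing the lower bound to its two diagonal blocks gives `-9δ I ≤ X` and `-9δ I ≤ -Y`.
Compressing the upper bound along the diagonal embedding `ξ ↦ (ξ, ξ)`, whose image is killed
by `A`, turns `[[X, 0], [0, -Y]]` into `X - Y` and `A + A²/(3δ)` into `0`; hence `X ≤ Y`. -/

open Filter Topology Set MeasureTheory

open Matrix

namespace MLE

variable {m l : Type*} [Fintype m] [Fintype l] {X Y : Matrix m m ℝ}

theorem submatrix (h : MLE X Y) (e : l → m) : MLE (X.submatrix e e) (Y.submatrix e e) :=
  PosSemidef.submatrix h e

theorem transpose_mul_mul (h : MLE X Y) (D : Matrix m l ℝ) : MLE (Dᵀ * X * D) (Dᵀ * Y * D) := by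
  simpa only [MLE, conjTranspose_eq_transpose_of_trivial, Matrix.mul_sub, Matrix.sub_mul]
    using PosSemidef.conjTranspose_mul_mul_same h D

theorem of_fromBlocks₁₁ {n : Type*} [Fintype n] {P₁ Q₁ R₁ S₁ P₂ Q₂ R₂ S₂ : Matrix n n ℝ}
    (h : MLE (fromBlocks P₁ Q₁ R₁ S₁) (fromBlocks P₂ Q₂ R₂ S₂)) : MLE P₁ P₂ :=
  h.submatrix Sum.inl

theorem of_fromBlocks₂₂ {n : Type*} [Fintype n] {P₁ Q₁ R₁ S₁ P₂ Q₂ R₂ S₂ : Matrix n n ℝ}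
    (h : MLE (fromBlocks P₁ Q₁ R₁ S₁) (fromBlocks P₂ Q₂ R₂ S₂)) : MLE S₁ S₂ :=
  h.submatrix Sum.inr

theorem of_neg_neg (h : MLE (-X) (-Y)) : MLE Y X := by
  rwa [MLE, neg_sub_neg] at h

theorem of_sub_zero (h : MLE (X - Y) 0) : MLE X Y := by
  rwa [MLE, zero_sub, neg_sub] at h

end MLE

section Blocks

variable {n R : Type*} [Fintype n] [DecidableEq n] [Ring R]

theorem fromBlocks_neg_neg_mul_fromRows_one_one (B : Matrix n n R) :
    fromBlocks B (-B) (-B) B * fromRows (1 : Matrix n n R) (1 : Matrix n n R) = 0 := by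
  simp [fromBlocks_mul_fromRows]

theorem transpose_fromRows_one_one_mul_fromBlocks_mul (P Q S T : Matrix n n R) :
    (fromRows (1 : Matrix n n R) (1 : Matrix n n R))ᵀ * fromBlocks P Q S T *
      fromRows (1 : Matrix n n R) (1 : Matrix n n R) = P + Q + S + T := by
  simp only [transpose_fromRows, transpose_one, fromCols_mul_fromBlocks, fromCols_mul_fromRows,
    Matrix.one_mul, Matrix.mul_one]
  abel

end Blocks

theorem MLE.of_fromBlocks_neg_le_of_mul_fromRows_one_one {n : Type*} [Fintype n]
    [DecidableEq n] {X Y : Matrix n n ℝ} {M : Matrix (n ⊕ n) (n ⊕ n) ℝ}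
    (h : MLE (fromBlocks X 0 0 (-Y)) M)
    (hM : M * fromRows (1 : Matrix n n ℝ) (1 : Matrix n n ℝ) = 0) : MLE X Y := by
  have hXY := h.transpose_mul_mul (fromRows (1 : Matrix n n ℝ) (1 : Matrix n n ℝ))
  rw [Matrix.mul_assoc _ M, hM, Matrix.mul_zero, transpose_fromRows_one_one_mul_fromBlocks_mul,
    add_zero, add_zero, ← sub_eq_add_neg] at hXY
  exact hXY.of_sub_zero

theorem hessian_ordering_from_crandall_ishii_general
    (n : ℕ) (δ : ℝ) (B : Mat n) (A : Matrix (Fin n ⊕ Fin n) (Fin n ⊕ Fin n) ℝ)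
    (hA : A = Matrix.fromBlocks B (-B) (-B) B) (X Y : Mat n)
    (h1 : MLE (-((9 * δ) • (1 : Matrix (Fin n ⊕ Fin n) (Fin n ⊕ Fin n) ℝ)))
      (Matrix.fromBlocks X 0 0 (-Y)))
    (h2 : MLE (Matrix.fromBlocks X 0 0 (-Y)) (A + (1 / (3 * δ)) • (A * A))) :
    MLE (-((9 * δ) • (1 : Mat n))) X ∧ MLE X Y ∧ MLE Y ((9 * δ) • (1 : Mat n)) := by
  rw [← fromBlocks_one, fromBlocks_smul, fromBlocks_neg] at h1
  refine ⟨h1.of_fromBlocks₁₁, ?_, h1.of_fromBlocks₂₂.of_neg_neg⟩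
  have hA_diag : A * fromRows (1 : Mat n) (1 : Mat n) = 0 :=
    hA ▸ fromBlocks_neg_neg_mul_fromRows_one_one B
  refine h2.of_fromBlocks_neg_le_of_mul_fromRows_one_one ?_
  rw [Matrix.add_mul, Matrix.smul_mul, Matrix.mul_assoc, hA_diag, Matrix.mul_zero, smul_zero,
    add_zero]

/-- Hessian ordering from the Crandall–Ishii matrix inequality: if
`-9δ I_{2n} ≤ [[X,0],[0,-Y]] ≤ A + (1/(3δ))A²` with `A = [[B,-B],[-B,B]]`,
`B = δ(I_n + 2qqᵀ)` and `|q| = 1`, then `-9δ I_n ≤ X ≤ Y ≤ 9δ I_n`. -/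
theorem hessian_ordering_from_crandall_ishii
    (n : ℕ) (hn : 1 ≤ n) (δ : ℝ) (hδ : 0 < δ) (q : En n) (hq : ‖q‖ = 1)
    (B : Mat n) (hB : B = δ • ((1 : Mat n) + (2:ℝ) • outer q))
    (A : Matrix (Fin n ⊕ Fin n) (Fin n ⊕ Fin n) ℝ)
    (hA : A = Matrix.fromBlocks B (-B) (-B) B)
    (X Y : Mat n) (hX : X.IsSymm) (hY : Y.IsSymm)
    (h1 : MLE (-((9 * δ) • (1 : Matrix (Fin n ⊕ Fin n) (Fin n ⊕ Fin n) ℝ)))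
      (Matrix.fromBlocks X 0 0 (-Y)))
    (h2 : MLE (Matrix.fromBlocks X 0 0 (-Y)) (A + (1 / (3 * δ)) • (A * A))) :
    MLE (-((9 * δ) • (1 : Mat n))) X ∧ MLE X Y ∧ MLE Y ((9 * δ) • (1 : Mat n)) :=
  hessian_ordering_from_crandall_ishii_general n δ B A hA X Y h1 h2
end

section
/- Localization of maximizers in the doubling-of-variables functional (estimates (2.30) in the proof of Theorem 1.4). Let n ≥ 1, T > 0, ε ∈ (0,1), and θ, β ∈ (0,1] with θ + β ≤ 1; let K ≥ 0, γ₁ ∈ (0,1], M > 0, C₀ > 0. Suppose u₁, u₂ : ℝ^n × [0,T] → ℝ satisfy |u_i(x,t) − u_i(y,s)| ≤ M(|x−y| + |t−s|) for i = 1,2, and v : ℝ^n × ℝ^n → ℝ satisfies |v(ξ,p) − v(ξ',p)| ≤ C₀ |p| |ξ−ξ'| and |v(ξ,p) − v(ξ,q)| ≤ C₀ ε^{−θ} |p−q| for all ξ, ξ', p, q ∈ ℝ^n. Define Φ(x,y,z,t,s) = u₁(x,t) − u₂(y,s) − ε v(x/ε, (z−y)/ε^β) − (|x−y|² + |t−s|²)/(2ε^β)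 − |x−z|²/(2ε^β) − K(t+s) − γ₁ √(1+|y|²). If Φ attains a global maximum over (ℝ^n)³ × [0,T]² at (x̂, ŷ, ẑ, t̂, ŝ), then there exists a constant C > 0 depending only on M, C₀, K such that |x̂ − ẑ| ≤ C ε^{1−θ} and |x̂ − ŷ| + |ŷ − ẑ| + |t̂ − ŝ| ≤ C ε^β. -/
open Filter Topology Set MeasureTheory

/-- The doubling-of-variables functional
`Φ(x,y,z,t,s) = u₁(x,t) − u₂(y,s) − ε v(x/ε, (z−y)/ε^β)
  − (|x−y|² + |t−s|²)/(2ε^β) − |x−z|²/(2ε^β) − K(t+s) − γ₁⟨y⟩`. -/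
noncomputable def dblPhi {n : ℕ} (ε β K γ₁ : ℝ) (u₁ u₂ : En n → ℝ → ℝ) (v : En n → En n → ℝ)
    (x y z : En n) (t s : ℝ) : ℝ :=
  u₁ x t - u₂ y s - ε * v (ε⁻¹ • x) ((ε ^ (-β)) • (z - y))
    - (‖x - y‖ ^ 2 + |t - s| ^ 2) / (2 * ε ^ β) - ‖x - z‖ ^ 2 / (2 * ε ^ β)
    - K * (t + s) - γ₁ * Real.sqrt (1 + ‖y‖ ^ 2)

/-!
Two competitors bound the penalties at a maximum point of `Φ`. Replacing `ẑ` by `x̂` removes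
the penalty `|x̂ - ẑ|² / 2ε^β` at the cost of moving the second argument of `v` by
`|x̂ - ẑ| / ε^β`, which the `ε^{-θ}`-Lipschitz bound prices at `C₀ ε^{1-θ-β} |x̂ - ẑ|`.
Replacing `(ŷ, ŝ)` by `(x̂, t̂)` removes `(|x̂ - ŷ|² + |t̂ - ŝ|²) / 2ε^β` at a cost linear in
`|x̂ - ŷ| + |t̂ - ŝ|`, since `u₂`, `K (t + s)`, `γ₁ √(1 + |y|²)` are Lipschitz and `ε^{1-θ-β} ≤ 1`.
In both cases a quadratic quantity is bounded by a linear one.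
-/

theorem le_of_sq_le_mul_self {a c : ℝ} (hc : 0 ≤ c) (h : a ^ 2 ≤ c * a) : a ≤ c := by
  nlinarith

theorem sqrt_one_add_norm_sq_sub_le {E : Type*} [SeminormedAddCommGroup E] (x y : E) :
    √(1 + ‖x‖ ^ 2) - √(1 + ‖y‖ ^ 2) ≤ ‖x - y‖ := by
  have hnorm (r : ℝ) (z : E) : ‖WithLp.toLp 2 (r, z)‖ = √(‖r‖ ^ 2 + ‖z‖ ^ 2) :=
    WithLp.prod_norm_eq_of_L2 _
  have := norm_sub_norm_le (WithLp.toLp 2 ((1 : ℝ), x)) (WithLp.toLp 2 ((1 : ℝ), y))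
  rwa [← WithLp.toLp_sub, Prod.mk_sub_mk, sub_self, hnorm, hnorm, hnorm, norm_zero, norm_one,
    one_pow, zero_pow two_ne_zero, zero_add, Real.sqrt_sq (norm_nonneg _)] at this

namespace dblPhi

variable {n : ℕ} {ε θ β K γ₁ M C₀ : ℝ} {u₁ u₂ : En n → ℝ → ℝ} {v : En n → En n → ℝ}
  {xh yh zh : En n} {th sh : ℝ}

theorem corrector_sub_le (hε : 0 < ε)
    (hv : ∀ ξ p q : En n, |v ξ p - v ξ q| ≤ C₀ * ε ^ (-θ) * ‖p - q‖) (ξ p q : En n) :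
    ε * (v ξ (ε ^ (-β) • p) - v ξ (ε ^ (-β) • q)) ≤ C₀ * ε ^ (1 - θ - β) * ‖p - q‖ := calc
  _ ≤ ε * (C₀ * ε ^ (-θ) * ‖ε ^ (-β) • p - ε ^ (-β) • q‖) :=
    mul_le_mul_of_nonneg_left ((le_abs_self _).trans (hv _ _ _)) hε.le
  _ = C₀ * ε ^ (1 - θ - β) * ‖p - q‖ := by
    rw [← smul_sub, norm_smul, Real.norm_of_nonneg (Real.rpow_nonneg hε.le _),
      show 1 - θ - β = 1 + -θ + -β by ring, Real.rpow_add hε, Real.rpow_add hε, Real.rpow_one]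
    ring

theorem norm_x_sub_z_le (hε : 0 < ε) (hC₀ : 0 ≤ C₀)
    (hv : ∀ ξ p q : En n, |v ξ p - v ξ q| ≤ C₀ * ε ^ (-θ) * ‖p - q‖)
    (h : dblPhi ε β K γ₁ u₁ u₂ v xh yh xh th sh ≤ dblPhi ε β K γ₁ u₁ u₂ v xh yh zh th sh) :
    ‖xh - zh‖ ≤ 2 * C₀ * ε ^ (1 - θ) := by
  have hE : 0 < ε ^ β := Real.rpow_pos_of_pos hε β
  have hcost := corrector_sub_le (β := β) hε hv (ε⁻¹ • xh) (xh - yh) (zh - yh)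
  rw [sub_sub_sub_cancel_right] at hcost
  simp only [dblPhi, sub_self, norm_zero, zero_pow two_ne_zero, zero_div, sub_zero] at h
  have hpen : ‖xh - zh‖ ^ 2 / (2 * ε ^ β) ≤ C₀ * ε ^ (1 - θ - β) * ‖xh - zh‖ := by
    linarith
  have hexp : ε ^ β * ε ^ (1 - θ - β) = ε ^ (1 - θ) := by
    rw [← Real.rpow_add hε]
    congr 1
    ring
  refine le_of_sq_le_mul_self (by positivity) ?_
  rw [div_le_iff₀ (by positivity)] at hpen
  linear_combination hpen + 2 * C₀ * ‖xh - zh‖ * hexp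

theorem norm_x_sub_y_add_abs_le (hε : 0 < ε) (hε1 : ε ≤ 1) (hθβ : θ + β ≤ 1) (hM : 0 ≤ M)
    (hC₀ : 0 ≤ C₀) (hK : 0 ≤ K) (hγ₁ : 0 ≤ γ₁) (hγ₁1 : γ₁ ≤ 1)
    (hu₂ : |u₂ xh th - u₂ yh sh| ≤ M * (‖xh - yh‖ + |th - sh|))
    (hv : ∀ ξ p q : En n, |v ξ p - v ξ q| ≤ C₀ * ε ^ (-θ) * ‖p - q‖)
    (h : dblPhi ε β K γ₁ u₁ u₂ v xh xh zh th th ≤ dblPhi ε β K γ₁ u₁ u₂ v xh yh zh th sh) :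
    ‖xh - yh‖ + |th - sh| ≤ 4 * (M + C₀ + K + 1) * ε ^ β := by
  simp only [dblPhi, sub_self, norm_zero, abs_zero, zero_pow two_ne_zero, add_zero, zero_div,
    sub_zero] at h
  have hE : 0 < ε ^ β := Real.rpow_pos_of_pos hε β
  have hcost := corrector_sub_le (β := β) hε hv (ε⁻¹ • xh) (zh - xh) (zh - yh)
  rw [sub_sub_sub_cancel_left, norm_sub_rev] at hcost
  set a := ‖xh - yh‖
  set b := |th - sh|
  have hcost' : C₀ * ε ^ (1 - θ - β) * a ≤ C₀ * a :=
    mul_le_mul_of_nonneg_right (mul_le_of_le_one_right hC₀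
      (Real.rpow_le_one hε.le hε1 (by linarith))) (norm_nonneg _)
  have hsqrt : γ₁ * (√(1 + ‖xh‖ ^ 2) - √(1 + ‖yh‖ ^ 2)) ≤ a := calc
    _ ≤ γ₁ * a := mul_le_mul_of_nonneg_left (sqrt_one_add_norm_sq_sub_le xh yh) hγ₁
    _ ≤ a := mul_le_of_le_one_left (norm_nonneg _) hγ₁1
  have hlin : K * (th - sh) ≤ K * b := mul_le_mul_of_nonneg_left (le_abs_self _) hK
  have hpen : (a ^ 2 + b ^ 2) / (2 * ε ^ β) ≤ (M + C₀ + K + 1) * (a + b) := by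
    linarith [le_abs_self (u₂ xh th - u₂ yh sh), abs_nonneg (th - sh),
      mul_nonneg hC₀ (abs_nonneg (th - sh)), mul_nonneg hK (norm_nonneg (xh - yh))]
  refine le_of_sq_le_mul_self (by positivity) ?_
  rw [div_le_iff₀ (by positivity)] at hpen
  nlinarith [sq_nonneg (a - b)]

end dblPhi

/-- Localization of maximizers in the doubling-of-variables functional (estimates
(2.30)): at a global maximum point `(x̂,ŷ,ẑ,t̂,ŝ)` of `Φ` one has
`|x̂−ẑ| ≤ Cε^{1−θ}` and `|x̂−ŷ| + |ŷ−ẑ| + |t̂−ŝ| ≤ Cε^β`, with `C` depending only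
on `M`, `C₀`, `K`. -/
theorem localization_of_maximizers
    (M C₀ K : ℝ) (hM : 0 < M) (hC₀ : 0 < C₀) (hK : 0 ≤ K) :
    ∃ C : ℝ, 0 < C ∧
      ∀ (n : ℕ), 1 ≤ n →
      ∀ T ε θ β γ₁ : ℝ, 0 < T → 0 < ε → ε < 1 → 0 < θ → θ ≤ 1 → 0 < β → β ≤ 1 →
        θ + β ≤ 1 → 0 < γ₁ → γ₁ ≤ 1 →
      ∀ u₁ u₂ : En n → ℝ → ℝ,
        (∀ (x y : En n) (t s : ℝ), t ∈ Icc (0:ℝ) T → s ∈ Icc (0:ℝ) T →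
          |u₁ x t - u₁ y s| ≤ M * (‖x - y‖ + |t - s|)) →
        (∀ (x y : En n) (t s : ℝ), t ∈ Icc (0:ℝ) T → s ∈ Icc (0:ℝ) T →
          |u₂ x t - u₂ y s| ≤ M * (‖x - y‖ + |t - s|)) →
      ∀ v : En n → En n → ℝ,
        (∀ (ξ ξ' p : En n), |v ξ p - v ξ' p| ≤ C₀ * ‖p‖ * ‖ξ - ξ'‖) →
        (∀ (ξ p q : En n), |v ξ p - v ξ q| ≤ C₀ * ε ^ (-θ) * ‖p - q‖) →
      ∀ (xh yh zh : En n) (th sh : ℝ), th ∈ Icc (0:ℝ) T → sh ∈ Icc (0:ℝ) T →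
        (∀ (x y z : En n) (t s : ℝ), t ∈ Icc (0:ℝ) T → s ∈ Icc (0:ℝ) T →
          dblPhi ε β K γ₁ u₁ u₂ v x y z t s ≤ dblPhi ε β K γ₁ u₁ u₂ v xh yh zh th sh) →
        ‖xh - zh‖ ≤ C * ε ^ (1 - θ) ∧
          ‖xh - yh‖ + ‖yh - zh‖ + |th - sh| ≤ C * ε ^ β := by
  refine ⟨8 * (M + C₀ + K + 1) + 2 * C₀, by positivity, ?_⟩
  intro n _ T ε θ β γ₁ _ hε hε1 _ _ _ _ hθβ hγ₁ hγ₁1 u₁ u₂ _ hu₂ v _ hv xh yh zh th sh hth hsh hmax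
  have hxz := dblPhi.norm_x_sub_z_le hε hC₀.le hv (hmax xh yh xh th sh hth hsh)
  have hxy := dblPhi.norm_x_sub_y_add_abs_le hε hε1.le hθβ hM.le hC₀.le hK hγ₁.le hγ₁1
    (hu₂ xh yh th sh hth hsh) hv (hmax xh xh zh th th hth hth)
  have hyz : ‖yh - zh‖ ≤ ‖xh - yh‖ + ‖xh - zh‖ := by
    simpa only [norm_sub_rev yh xh] using norm_sub_le_norm_sub_add_norm_sub yh xh zh
  have hpow : ε ^ (1 - θ) ≤ ε ^ β := Real.rpow_le_rpow_of_exponent_ge hε hε1.le (by linarith)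
  have hC₀pow : C₀ * ε ^ (1 - θ) ≤ C₀ * ε ^ β := mul_le_mul_of_nonneg_left hpow hC₀.le
  constructor
  · have : 0 ≤ (M + C₀ + K + 1) * ε ^ (1 - θ) := by positivity
    linarith
  · linarith [abs_nonneg (th - sh)]
end
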